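/- arXiv:2601.16276 — 2 statements merged into one kernel-verified Lean document; each statement's English description precedes it below -/
import Mathlib

section
/- If P and Q are probability mass functions on a finite set A with Q(a) > 0 whenever P(a) > 0, then d_TV(P, Q) ≤ sqrt((1/2)·D_KL(P ‖ Q)), where D_KL(P ‖ Q) = Σ_a P(a)·log(P(a)/Q(a)) (Pinsker's inequality). -/
/-!
Let `S = {a | Q a < P a}`, so that `d_TV(P, Q) = P(S) - Q(S)`. Merging the atoms of `S` and of
its complement can only decrease the divergence (log-sum inequality), which reduces the claim to
two-point distributions `(p, 1 - p)` and `(q, 1 - q)`. There `x ↦ kl(p, x) - 2 (p - x)²` is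
antitone on `[q, p]`, because its derivative is `(p - x) (4 - 1 / (x (1 - x)))` and
`x (1 - x) ≤ 1 / 4`; it vanishes at `x = p`.
-/

open Real Finset

section

variable {ι : Type*}

lemma mul_log_le_mul_log_div_sub_add {x y c : ℝ} (hc : 0 < c) (hx : 0 ≤ x) (hy : 0 ≤ y)
    (hxy : 0 < x → 0 < y) : x * log c ≤ x * log (x / y) - x + c * y := by
  rcases hx.eq_or_lt with rfl | hx
  · simpa using mul_nonneg hc.le hy
  have hy := hxy hx
  have hlog : log (c / (x / y)) ≤ c / (x / y) - 1 := log_le_sub_one_of_pos (by positivity)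
  rw [log_div hc.ne' (by positivity)] at hlog
  have hcancel : x * (c / (x / y) - 1) = c * y - x := by field_simp
  nlinarith [mul_le_mul_of_nonneg_left hlog hx.le]

theorem sum_mul_log_div_sum_le (s : Finset ι) {f g : ι → ℝ} (hf : ∀ i ∈ s, 0 ≤ f i)
    (hg : ∀ i ∈ s, 0 ≤ g i) (hfg : ∀ i ∈ s, 0 < f i → 0 < g i) :
    (∑ i ∈ s, f i) * log ((∑ i ∈ s, f i) / ∑ i ∈ s, g i) ≤ ∑ i ∈ s, f i * log (f i / g i) := by
  rcases (sum_nonneg hf).eq_or_lt with hF | hF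
  · rw [← hF, zero_mul]
    refine sum_nonneg fun i hi => ?_
    rw [(sum_eq_zero_iff_of_nonneg hf).1 hF.symm i hi, zero_mul]
  obtain ⟨i, hi, hfi⟩ := (sum_pos_iff_of_nonneg hf).1 hF
  have hG : 0 < ∑ i ∈ s, g i := sum_pos' hg ⟨i, hi, hfg i hi hfi⟩
  have hsum := sum_le_sum fun i hi =>
    mul_log_le_mul_log_div_sub_add (div_pos hF hG) (hf i hi) (hg i hi) (hfg i hi)
  rw [← sum_mul, sum_add_distrib, sum_sub_distrib, ← mul_sum, div_mul_cancel₀ _ hG.ne'] at hsum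
  linarith

noncomputable def binaryKL (p q : ℝ) : ℝ :=
  p * log (p / q) + (1 - p) * log ((1 - p) / (1 - q))

lemma binaryKL_le_sum_mul_log_div [Fintype ι] {P Q : ι → ℝ} (hP0 : ∀ i, 0 ≤ P i)
    (hP1 : ∑ i, P i = 1) (hQ0 : ∀ i, 0 ≤ Q i) (hQ1 : ∑ i, Q i = 1)
    (hPQ : ∀ i, 0 < P i → 0 < Q i) (s : Finset ι) :
    binaryKL (∑ i ∈ s, P i) (∑ i ∈ s, Q i) ≤ ∑ i, P i * log (P i / Q i) := by
  classical
  have hPc : 1 - ∑ i ∈ s, P i = ∑ i ∈ sᶜ, P i := by rw [← hP1, ← sum_add_sum_compl s]; ring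
  have hQc : 1 - ∑ i ∈ s, Q i = ∑ i ∈ sᶜ, Q i := by rw [← hQ1, ← sum_add_sum_compl s]; ring
  rw [binaryKL, hPc, hQc, ← sum_add_sum_compl s]
  exact add_le_add
    (sum_mul_log_div_sum_le s (fun i _ => hP0 i) (fun i _ => hQ0 i) (fun i _ => hPQ i))
    (sum_mul_log_div_sum_le sᶜ (fun i _ => hP0 i) (fun i _ => hQ0 i) (fun i _ => hPQ i))

lemma hasDerivAt_mul_log_div (a : ℝ) {x : ℝ} (hx : x ≠ 0) :
    HasDerivAt (fun y => a * log (a / y)) (-a / x) x := by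
  rcases eq_or_ne a 0 with rfl | ha
  · simpa using hasDerivAt_const x (0 : ℝ)
  have h : HasDerivAt (fun y => a / y) (-a / x ^ 2) x := by
    simpa [div_eq_mul_inv] using (hasDerivAt_inv hx).const_mul a
  exact ((h.log (div_ne_zero ha hx)).const_mul a).congr_deriv (by field_simp)

lemma hasDerivAt_binaryKL_right (p : ℝ) {x : ℝ} (hx0 : x ≠ 0) (hx1 : x ≠ 1) :
    HasDerivAt (binaryKL p) ((1 - p) / (1 - x) - p / x) x := by
  have h := (hasDerivAt_mul_log_div (1 - p) (sub_ne_zero.2 hx1.symm)).comp x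
    ((hasDerivAt_id x).const_sub 1)
  exact ((hasDerivAt_mul_log_div p hx0).add h).congr_deriv (by ring)

theorem two_mul_sq_le_binaryKL {p q : ℝ} (hq : 0 < q) (hqp : q ≤ p) (hp : p ≤ 1) :
    2 * (p - q) ^ 2 ≤ binaryKL p q := by
  set F : ℝ → ℝ := fun x => binaryKL p x - 2 * (p - x) ^ 2
  have hF' : ∀ x, 0 < x → x < 1 →
      HasDerivAt F ((1 - p) / (1 - x) - p / x + 4 * (p - x)) x := fun x hx0 hx1 =>
    ((hasDerivAt_binaryKL_right p hx0.ne' hx1.ne).sub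
      ((((hasDerivAt_id x).const_sub p).pow 2).const_mul 2)).congr_deriv
        (by simp only [id_eq]; ring)
  have hFcont : ContinuousOn F (Set.Icc q p) := by
    rcases hp.lt_or_eq with hp | rfl
    · exact fun x hx =>
        (hF' x (hq.trans_le hx.1) (hx.2.trans_lt hp)).continuousAt.continuousWithinAt
    -- at `p = 1` the derivative is unavailable at the endpoint `x = 1`, but there the
    -- `1 - p` summand of `binaryKL` vanishes identically
    · simp only [F, binaryKL, sub_self, zero_mul, add_zero, one_mul]
      refine ((continuousOn_log.comp (continuousOn_const.div continuousOn_id ?_) ?_).sub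
        (by fun_prop))
      · exact fun x hx => (hq.trans_le hx.1).ne'
      · exact fun x hx => div_ne_zero one_ne_zero (hq.trans_le hx.1).ne'
  have hF'_nonpos : ∀ x ∈ Set.Ioo q p, (1 - p) / (1 - x) - p / x + 4 * (p - x) ≤ 0 := by
    rintro x ⟨hqx, hxp⟩
    have hx0 : 0 < x := hq.trans hqx
    have hx1 : 0 < 1 - x := by linarith
    have hquarter : 4 * (x * (1 - x)) ≤ 1 := by nlinarith [sq_nonneg (2 * x - 1)]
    have hsplit : (1 - p) / (1 - x) - p / x = -((p - x) / (x * (1 - x))) := by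
      field_simp; ring
    have : 4 * (p - x) ≤ (p - x) / (x * (1 - x)) := by
      rw [le_div_iff₀ (by positivity)]; nlinarith
    linarith
  have hanti : AntitoneOn F (Set.Icc q p) :=
    antitoneOn_of_hasDerivWithinAt_nonpos (convex_Icc q p) hFcont
      (by simpa only [interior_Icc] using fun x hx =>
        (hF' x (hq.trans hx.1) (hx.2.trans_le hp)).hasDerivWithinAt)
      (by simpa only [interior_Icc] using hF'_nonpos)
  have hFp : F p = 0 := by simp [F, binaryKL]
  have hFq : F p ≤ F q := hanti (Set.left_mem_Icc.2 hqp) (Set.right_mem_Icc.2 hqp) hqp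
  rw [hFp] at hFq
  exact sub_nonneg.1 hFq

lemma half_sum_abs_sub_eq_sum_filter (s : Finset ι) {f g : ι → ℝ}
    (h : ∑ i ∈ s, f i = ∑ i ∈ s, g i) :
    (1 / 2) * ∑ i ∈ s, |f i - g i| = ∑ i ∈ s with g i < f i, (f i - g i) := by
  have hzero : ∑ i ∈ s with g i < f i, (f i - g i) + ∑ i ∈ s with ¬g i < f i, (f i - g i) = 0 := by
    rw [sum_filter_add_sum_filter_not, sum_sub_distrib, h, sub_self]
  rw [← sum_filter_add_sum_filter_not s (fun i => g i < f i),
    sum_congr rfl fun i hi => abs_of_pos (sub_pos.2 (mem_filter.1 hi).2),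
    sum_congr rfl fun i hi => abs_of_nonpos (sub_nonpos.2 (not_lt.1 (mem_filter.1 hi).2)),
    sum_neg_distrib]
  linarith

theorem sum_sub_sum_le_sqrt_half_sum_mul_log_div [Fintype ι] {P Q : ι → ℝ}
    (hP0 : ∀ i, 0 ≤ P i) (hP1 : ∑ i, P i = 1) (hQ0 : ∀ i, 0 ≤ Q i) (hQ1 : ∑ i, Q i = 1)
    (hPQ : ∀ i, 0 < P i → 0 < Q i) (s : Finset ι) :
    ∑ i ∈ s, P i - ∑ i ∈ s, Q i ≤ √((1 / 2) * ∑ i, P i * log (P i / Q i)) := by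
  rcases le_or_gt (∑ i ∈ s, P i) (∑ i ∈ s, Q i) with hle | hlt
  · exact (sub_nonpos.2 hle).trans (sqrt_nonneg _)
  have hq : 0 < ∑ i ∈ s, Q i := by
    obtain ⟨i, hi, hPi⟩ := (sum_pos_iff_of_nonneg fun i _ => hP0 i).1
      ((sum_nonneg fun i _ => hQ0 i).trans_lt hlt)
    exact sum_pos' (fun i _ => hQ0 i) ⟨i, hi, hPQ i hPi⟩
  have hp : ∑ i ∈ s, P i ≤ 1 := hP1 ▸ sum_le_univ_sum_of_nonneg hP0
  rw [le_sqrt' (sub_pos.2 hlt)]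
  linarith [two_mul_sq_le_binaryKL hq hlt.le hp,
    binaryKL_le_sum_mul_log_div hP0 hP1 hQ0 hQ1 hPQ s]

end

theorem pinsker_inequality
    {A : Type*} [Fintype A]
    (P Q : A → ℝ)
    (hP0 : ∀ a, 0 ≤ P a) (hP1 : ∑ a, P a = 1)
    (hQ0 : ∀ a, 0 ≤ Q a) (hQ1 : ∑ a, Q a = 1)
    (hac : ∀ a, 0 < P a → 0 < Q a) :
    (1/2) * ∑ a, |P a - Q a| ≤
      Real.sqrt ((1/2) * ∑ a, P a * Real.log (P a / Q a)) := by
  rw [half_sum_abs_sub_eq_sum_filter univ (hP1.trans hQ1.symm), sum_sub_distrib]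
  exact sum_sub_sum_le_sqrt_half_sum_mul_log_div hP0 hP1 hQ0 hQ1 hac _
end

section
/- In the Bertrand duopoly with integer prices, demand D(p) = max(0, (p_max − p)/d), cost c ∈ ℕ, and the winner-takes-all rule with tie-splitting: if the opponent sets price q with c + 1 < q ≤ (c + p_max)/2, then undercutting to q − 1 yields strictly greater profit than matching q (i.e., (q − 1 − c)·(p_max − (q−1))/d > (q − c)·(p_max − q)/(2d)). -/
theorem bertrand_undercutting_beats_matching
    (c q pmax : ℕ) (d : ℝ) (hd : 0 < d)
    (hcq : c + 1 < q) (hq : 2 * q ≤ c + pmax) (hqp : q < pmax) :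
    ((q : ℝ) - 1 - c) * ((pmax : ℝ) - ((q : ℝ) - 1)) / d >
      ((q : ℝ) - c) * ((pmax : ℝ) - q) / (2 * d) := by
  have h1 : (c : ℝ) + 2 ≤ q := by exact_mod_cast hcq
  have h2 : 2 * (q : ℝ) ≤ c + pmax := by exact_mod_cast hq
  have h3 : (q : ℝ) < pmax := by exact_mod_cast hqp
  rw [gt_iff_lt, div_lt_div_iff₀ (by positivity) hd]
  nlinarith [mul_nonneg (mul_nonneg (by linarith : (0:ℝ) ≤ (pmax:ℝ) - q) (by linarith : (0:ℝ) ≤ (q:ℝ) - c - 2)) hd.le, mul_pos (by linarith : (0:ℝ) < (q:ℝ) - c - 1) hd]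
end
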